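/- arXiv:1009.4750 — 6 statements merged into one kernel-verified Lean document; each statement's English description precedes it below -/
import Mathlib

section
/- Let M be a collection of (n,d)-types that is closed under taking coordinatewise nonempty subsets (if A∈M and J_i are nonempty with J_i⊆A_i for all i∈[n], then (J_1,…,J_n)∈M). If for any two types A,B∈M there exists a strong path in M from A to B, then M satisfies the elimination property: for any A,B∈M and any j∈[n] there exists C∈M with C_j=A_j∪B_j and C_k∈{A_k, B_k, A_k∪B_k} for all k∈[n]. -/
/-!
Take a strong path `A = C⁰, …, C^q = B` and let `t` be the first step at which coordinate `j`
loses an element (or `t = q`). Coordinate `j` only grows before `t` and only shrinks after it,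
so `C^t_j ⊇ A_j ∪ B_j`. Every other coordinate `k` either lost an element before `t`, and then
only shrinks from there on, so `C^t_k ⊇ B_k`; or it did not, so `C^t_k ⊇ A_k`. Shrinking `C^t`
coordinatewise to `A_j ∪ B_j`, resp. `A_k` or `B_k`, gives the eliminator.
-/

open scoped Classical

namespace TOMPaper

variable {n d : ℕ}

/-- The undirected adjacency relation (on `Fin n ⊕ Fin d`) of the subgraph of the
complete bipartite graph `K_{n,d}` encoded by `T` (edge `(i,j)` iff `j ∈ T i`). -/
def Adj (T : Fin n → Finset (Fin d)) : Fin n ⊕ Fin d → Fin n ⊕ Fin d → Prop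
  | Sum.inl i, Sum.inr j => j ∈ T i
  | Sum.inr j, Sum.inl i => j ∈ T i
  | _, _ => False

/-- `T` is a spanning tree of `K_{n,d}`: connected and with exactly `n + d - 1` edges. -/
def IsSpanningTree (T : Fin n → Finset (Fin d)) : Prop :=
  (∀ u v : Fin n ⊕ Fin d, Relation.ReflTransGen (Adj T) u v) ∧
  (∑ i : Fin n, (T i).card) = n + d - 1

/-- The subgraph `T ∖ e` where `e` is the edge `(i, j)`. -/
def DeleteEdge (T : Fin n → Finset (Fin d)) (i : Fin n) (j : Fin d) :
    Fin n → Finset (Fin d) :=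
  Function.update T i ((T i).erase j)

/-- The subgraph `T` of `K_{n,d}` has an isolated vertex. -/
def HasIsolatedVertex (T : Fin n → Finset (Fin d)) : Prop :=
  (∃ i : Fin n, T i = ∅) ∨ (∃ j : Fin d, ∀ i : Fin n, j ∉ T i)

/-- One directed step in `U(T,T')`: edges of `T` oriented left-to-right and
edges of `T'` oriented right-to-left. -/
def UStep (T T' : Fin n → Finset (Fin d)) : Fin n ⊕ Fin d → Fin n ⊕ Fin d → Prop
  | Sum.inl i, Sum.inr j => j ∈ T i
  | Sum.inr j, Sum.inl i => j ∈ T' i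
  | _, _ => False

/-- The directed graph `U(T,T')` has no directed cycle. -/
def UAcyclic (T T' : Fin n → Finset (Fin d)) : Prop :=
  ∀ v, ¬ Relation.TransGen (UStep T T') v v

/-- The collection `𝒯` of subgraphs of `K_{n,d}` encodes a fine mixed subdivision of
`nΔ_{d-1}` (equivalently, a triangulation of `Δ_{n-1} × Δ_{d-1}`). -/
def EncodesFMS (𝒯 : Set (Fin n → Finset (Fin d))) : Prop :=
  𝒯.Nonempty ∧
  (∀ T ∈ 𝒯, IsSpanningTree T) ∧
  (∀ T ∈ 𝒯, ∀ i : Fin n, ∀ j ∈ T i,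
    HasIsolatedVertex (DeleteEdge T i j) ∨
    ∃ T' ∈ 𝒯, T' ≠ T ∧ ∀ i', DeleteEdge T i j i' ⊆ T' i') ∧
  (∀ T ∈ 𝒯, ∀ T' ∈ 𝒯, UAcyclic T T')

/-- The set of types of `𝒯`: tuples of nonempty sets contained coordinatewise in
some tree of `𝒯`. -/
def Types (𝒯 : Set (Fin n → Finset (Fin d))) : Set (Fin n → Finset (Fin d)) :=
  {A | (∀ i, (A i).Nonempty) ∧ ∃ T ∈ 𝒯, ∀ i, A i ⊆ T i}

/-- Boundary axiom. -/
def Boundary (M : Set (Fin n → Finset (Fin d))) : Prop :=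
  ∀ j : Fin d, (fun _ : Fin n => ({j} : Finset (Fin d))) ∈ M

/-- Elimination axiom. -/
def Elimination (M : Set (Fin n → Finset (Fin d))) : Prop :=
  ∀ A ∈ M, ∀ B ∈ M, ∀ j : Fin n, ∃ C ∈ M,
    C j = A j ∪ B j ∧ ∀ k : Fin n, C k = A k ∨ C k = B k ∨ C k = A k ∪ B k

/-- An admissible traversal step from `j` to `k` in the comparability graph `CG_{A,B}`:
either a directed edge `j → k`, or an undirected edge between `j` and `k` (which may be
traversed in either direction).  In both cases this amounts to `j ∈ A i`, `k ∈ B i`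
for some `i`. -/
def CGArc (A B : Fin n → Finset (Fin d)) (j k : Fin d) : Prop :=
  ∃ i : Fin n, j ∈ A i ∧ k ∈ B i

/-- A strictly directed edge `j → k` of the comparability graph `CG_{A,B}`. -/
def CGDirected (A B : Fin n → Finset (Fin d)) (j k : Fin d) : Prop :=
  ∃ i : Fin n, j ∈ A i ∧ k ∈ B i ∧ ¬ (j ∈ A i ∩ B i ∧ k ∈ A i ∩ B i)

/-- `CG_{A,B}` has no directed cycle: there is no closed walk using at least one
directed edge (equivalently, no directed cycle with distinct vertices). -/
def CGAcyclic (A B : Fin n → Finset (Fin d)) : Prop :=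
  ¬ ∃ j k : Fin d, CGDirected A B j k ∧ Relation.ReflTransGen (CGArc A B) k j

/-- Comparability axiom. -/
def Comparability (M : Set (Fin n → Finset (Fin d))) : Prop :=
  ∀ A ∈ M, ∀ B ∈ M, CGAcyclic A B

/-- `P = (P 0, …, P (r-1))` is an ordered partition of `[d]`. -/
def IsOrderedPartition {r : ℕ} (P : Fin r → Finset (Fin d)) : Prop :=
  (∀ s, (P s).Nonempty) ∧ (∀ s t, s ≠ t → Disjoint (P s) (P t)) ∧
  (∀ j : Fin d, ∃ s, j ∈ P s)

/-- Surrounding axiom: every refinement `A_P = (A i ∩ P (m i))_i`, where `m i` is the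
largest index with `A i ∩ P (m i)` nonempty, lies in `M`. -/
def Surrounding (M : Set (Fin n → Finset (Fin d))) : Prop :=
  ∀ A ∈ M, ∀ r : ℕ, ∀ P : Fin r → Finset (Fin d), IsOrderedPartition P →
    ∀ m : Fin n → Fin r,
      (∀ i, (A i ∩ P (m i)).Nonempty ∧ ∀ s, (A i ∩ P s).Nonempty → s ≤ m i) →
      (fun i => A i ∩ P (m i)) ∈ M

/-- `M` is a tropical oriented matroid with parameters `(n,d)`. -/
def IsTOM (M : Set (Fin n → Finset (Fin d))) : Prop :=
  (∀ A ∈ M, ∀ i, (A i).Nonempty) ∧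
  Boundary M ∧ Elimination M ∧ Comparability M ∧ Surrounding M

/-- Two types are adjacent: they differ in exactly one coordinate, and in that
coordinate they differ by exactly one element. -/
def TypeAdj (A B : Fin n → Finset (Fin d)) : Prop :=
  ∃ i : Fin n, (∀ k, k ≠ i → A k = B k) ∧
    ((∃ x, x ∉ A i ∧ B i = insert x (A i)) ∨ (∃ x, x ∉ B i ∧ A i = insert x (B i)))

/-- `C 0, C 1, …, C q` is a path of types from `A` to `B` all of whose members lie
in `M`. -/
def IsPathIn (M : Set (Fin n → Finset (Fin d))) (q : ℕ)
    (C : ℕ → Fin n → Finset (Fin d)) (A B : Fin n → Finset (Fin d)) : Prop :=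
  C 0 = A ∧ C q = B ∧ (∀ t ≤ q, C t ∈ M) ∧ ∀ t < q, TypeAdj (C t) (C (t + 1))

/-- `C 0, C 1, …, C q` is a path of types from `A` to `B` (no membership condition). -/
def IsPath (q : ℕ) (C : ℕ → Fin n → Finset (Fin d))
    (A B : Fin n → Finset (Fin d)) : Prop :=
  C 0 = A ∧ C q = B ∧ ∀ t < q, TypeAdj (C t) (C (t + 1))

/-- The path `C 0, …, C q` from `A` to `B` is strong in coordinate `i`:
(1) after some element is deleted from coordinate `i`, no element is ever added to it;
(2) `C t i ⊆ A i ∪ B i` for all `t`;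
(3) once an element is added to coordinate `i`, it is never deleted afterwards. -/
def StrongIn (q : ℕ) (C : ℕ → Fin n → Finset (Fin d))
    (A B : Fin n → Finset (Fin d)) (i : Fin n) : Prop :=
  (∀ s t, s ≤ t → t < q → ¬ C s i ⊆ C (s + 1) i → C (t + 1) i ⊆ C t i) ∧
  (∀ t ≤ q, C t i ⊆ A i ∪ B i) ∧
  (∀ s t, s < t → t ≤ q → ∀ x, x ∉ C s i → x ∈ C (s + 1) i → x ∈ C t i)

/-- Left degree vector: `ldv T i = deg_T(i) - 1` over left vertices. -/
def ldv (T : Fin n → Finset (Fin d)) : Fin n → ℕ := fun i => (T i).card - 1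

/-- Degree of the right vertex `j` in `T`. -/
def rdeg (T : Fin n → Finset (Fin d)) : Fin d → ℕ :=
  fun j => (Finset.univ.filter (fun i : Fin n => j ∈ T i)).card

/-- Right degree vector: `rdv T j = deg_T(j) - 1` over right vertices. -/
def rdv (T : Fin n → Finset (Fin d)) : Fin d → ℕ := fun j => rdeg T j - 1

/-- The subgraph of `K_{n,d}` encoded by `T` contains a cycle: an alternating closed
sequence of distinct left vertices and distinct right vertices. -/
def HasCycle (T : Fin n → Finset (Fin d)) : Prop :=
  ∃ m : ℕ, ∃ L : Fin (m + 2) → Fin n, ∃ R : Fin (m + 2) → Fin d,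
    Function.Injective L ∧ Function.Injective R ∧
    ∀ s : Fin (m + 2), R s ∈ T (L s) ∧ R s ∈ T (L (s + 1))

/-- `Q_α(M)`: the types `A ∈ M` with `|A i| > α i` for all `i`. -/
def Qset (M : Set (Fin n → Finset (Fin d))) (α : Fin n → ℕ) :
    Set (Fin n → Finset (Fin d)) :=
  {A | A ∈ M ∧ ∀ i, α i < (A i).card}

/-- Two cells share a common facet. -/
def ShareFacet (T T' : Fin n → Finset (Fin d)) : Prop :=
  ∃ i : Fin n, ∃ j ∈ T i, ∃ i' : Fin n, ∃ j' ∈ T' i',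
    DeleteEdge T i j = DeleteEdge T' i' j' ∧
    ¬ HasIsolatedVertex (DeleteEdge T i j)

/-- The set of right vertices lying in a different connected component of `T` than
the right vertex `v`. -/
def OppComponent (T : Fin n → Finset (Fin d)) (v : Fin d) : Set (Fin d) :=
  {j | ¬ Relation.ReflTransGen (Adj T) (Sum.inr j) (Sum.inr v)}

/-- The simplex `Δ_I ⊆ ℝ^d`: the convex hull of the standard basis vectors indexed
by `I`. -/
def simplexOf (I : Finset (Fin d)) : Set (Fin d → ℝ) :=
  convexHull ℝ {x : Fin d → ℝ | ∃ i ∈ I, x = Pi.single i 1}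

/-- The Minkowski sum `Δ_{T 1} + ⋯ + Δ_{T n} ⊆ ℝ^d`. -/
def cell (T : Fin n → Finset (Fin d)) : Set (Fin d → ℝ) :=
  {x | ∃ y : Fin n → Fin d → ℝ, (∀ i, y i ∈ simplexOf (T i)) ∧ x = ∑ i, y i}

/-- The unit simplex at location `a`: the convex hull of `a + e 1, …, a + e d`. -/
def unitSimplexAt (a : Fin d → ℕ) : Set (Fin d → ℝ) :=
  convexHull ℝ {x : Fin d → ℝ | ∃ j : Fin d, x = (fun j' => (a j' : ℝ)) + Pi.single j 1}

/-- A matrix is totally unimodular if every square submatrix has determinant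
`0`, `1` or `-1`. -/
def IsTU {R C : Type*} (Y : Matrix R C ℚ) : Prop :=
  ∀ k : ℕ, ∀ f : Fin k → R, ∀ g : Fin k → C,
    Function.Injective f → Function.Injective g →
      (Y.submatrix f g).det = 0 ∨ (Y.submatrix f g).det = 1 ∨ (Y.submatrix f g).det = -1

/-- `Δ(A,B) = Σ_i (|A_i ∖ B_i| + |B_i ∖ A_i|)`. -/
def deltaDist (A B : Fin n → Finset (Fin d)) : ℕ :=
  ∑ i : Fin n, ((A i \ B i).card + (B i \ A i).card)

section GrowsThenShrinks

variable {β : Type*} [Preorder β] {f : ℕ → β} {a b q : ℕ}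

lemma le_of_forall_le_succ (hab : a ≤ b) (h : ∀ t, a ≤ t → t < b → f t ≤ f (t + 1)) :
    f a ≤ f b := by
  induction b, hab using Nat.le_induction with
  | base => exact le_rfl
  | succ b hab ih => exact (ih fun t h₁ h₂ => h t h₁ (by omega)).trans (h b hab (by omega))

lemma le_of_forall_succ_le (hab : a ≤ b) (h : ∀ t, a ≤ t → t < b → f (t + 1) ≤ f t) :
    f b ≤ f a :=
  le_of_forall_le_succ (β := βᵒᵈ) hab h

def GrowsThenShrinks (q : ℕ) (f : ℕ → β) : Prop :=
  ∀ s t, s ≤ t → t < q → ¬ f s ≤ f (s + 1) → f (t + 1) ≤ f t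

lemma GrowsThenShrinks.le_or_le (hf : GrowsThenShrinks q f) {t : ℕ} (htq : t ≤ q) :
    f 0 ≤ f t ∨ f q ≤ f t := by
  by_cases hshrink : ∃ s < t, ¬ f s ≤ f (s + 1)
  · obtain ⟨s, hst, hs⟩ := hshrink
    exact .inr <| le_of_forall_succ_le htq fun u htu huq => hf s u (by omega) huq hs
  · push Not at hshrink
    exact .inl <| le_of_forall_le_succ t.zero_le fun u _ hut => hshrink u hut

lemma GrowsThenShrinks.exists_peak (hf : GrowsThenShrinks q f) :
    ∃ t ≤ q, f 0 ≤ f t ∧ f q ≤ f t := by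
  by_cases hshrink : ∃ t, t < q ∧ ¬ f t ≤ f (t + 1)
  · obtain ⟨htq, ht⟩ := Nat.find_spec hshrink
    refine ⟨Nat.find hshrink, htq.le, ?_, ?_⟩
    · refine le_of_forall_le_succ (Nat.zero_le _) fun u _ hu => ?_
      exact not_not.mp fun h => Nat.find_min hshrink hu ⟨hu.trans htq, h⟩
    · exact le_of_forall_succ_le htq.le fun u hu huq => hf _ u hu huq ht
  · push Not at hshrink
    exact ⟨q, le_rfl, le_of_forall_le_succ q.zero_le fun u _ hu => hshrink u hu, le_rfl⟩

end GrowsThenShrinks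

lemma StrongIn.growsThenShrinks {q : ℕ} {C : ℕ → Fin n → Finset (Fin d)}
    {A B : Fin n → Finset (Fin d)} {i : Fin n} (h : StrongIn q C A B i) :
    GrowsThenShrinks q (C · i) :=
  h.1

lemma exists_eliminator_of_subset {M : Set (Fin n → Finset (Fin d))}
    (hclosed : ∀ A ∈ M, ∀ J : Fin n → Finset (Fin d),
      (∀ i, (J i).Nonempty) → (∀ i, J i ⊆ A i) → J ∈ M)
    {A B C : Fin n → Finset (Fin d)} (hA : ∀ i, (A i).Nonempty) (hB : ∀ i, (B i).Nonempty)
    (hC : C ∈ M) {j : Fin n} (hCj : A j ∪ B j ⊆ C j) (hCk : ∀ k, A k ⊆ C k ∨ B k ⊆ C k) :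
    ∃ D ∈ M, D j = A j ∪ B j ∧ ∀ k, D k = A k ∨ D k = B k ∨ D k = A k ∪ B k := by
  let D : Fin n → Finset (Fin d) := fun k =>
    if k = j then A j ∪ B j else if A k ⊆ C k then A k else B k
  refine ⟨D, hclosed C hC D (fun k => ?_) (fun k => ?_), by simp [D], fun k => ?_⟩
  · unfold D; split_ifs
    exacts [(hA j).mono Finset.subset_union_left, hA k, hB k]
  · unfold D; split_ifs with hkj hAk
    exacts [hkj ▸ hCj, hAk, (hCk k).resolve_left hAk]
  · unfold D; split_ifs with hkj
    exacts [hkj ▸ .inr (.inr rfl), .inl rfl, .inr (.inl rfl)]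

/-- if a collection of `(n,d)`-types is closed under coordinatewise
nonempty subsets and any two of its members are joined by a strong path inside it,
then it satisfies the elimination property. -/
theorem strong_path_implies_elimination {n d : ℕ}
    (M : Set (Fin n → Finset (Fin d)))
    (hM : ∀ A ∈ M, ∀ i, (A i).Nonempty)
    (hclosed : ∀ A ∈ M, ∀ J : Fin n → Finset (Fin d),
      (∀ i, (J i).Nonempty) → (∀ i, J i ⊆ A i) → J ∈ M)
    (hpath : ∀ A ∈ M, ∀ B ∈ M, ∃ q : ℕ, ∃ C : ℕ → Fin n → Finset (Fin d),
      IsPathIn M q C A B ∧ ∀ i, StrongIn q C A B i) :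
    Elimination M := by
  intro A hA B hB j
  obtain ⟨q, C, ⟨rfl, rfl, hmem, -⟩, hstrong⟩ := hpath A hA B hB
  obtain ⟨t, htq, hAt, hBt⟩ := (hstrong j).growsThenShrinks.exists_peak
  exact exists_eliminator_of_subset hclosed (hM _ hA) (hM _ hB) (hmem t htq)
    (Finset.union_subset hAt hBt) fun k => (hstrong k).growsThenShrinks.le_or_le htq

end TOMPaper
end

section
/- Let M be a tropical oriented matroid with parameters (n,d), and let A=(A_1,…,A_n)∈M be a type which, viewed as a subgraph of K_{n,d}, contains no cycle. Choose i∈[n] with |A_i|>1 and any k∈A_i, and let A' be obtained from A by deleting k from A_i. Then A'∈M. -/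
open scoped Classical

namespace TOMPaper

variable {n d : ℕ}

/-!
Deleting the edge `(i, k)` from the forest `A` separates `i` from `k`. Let `S` be the set of
right vertices that can still reach `k`. A coordinate `A i'` with `i' ≠ i` is a star around the
left vertex `i'`, so it lies entirely inside or entirely outside `S`, while `A i` meets `S` only
in `k`, because any other `j ∈ A i` reaching `k` would close a cycle with the edges `(i, j)`
and `(i, k)`. Hence the refinement of `A` by the ordered partition `(S, Sᶜ)`, which lies in `M` by
the surrounding axiom, is exactly `A` with `k` deleted from `A i`.
-/

def typeGraph (T : Fin n → Finset (Fin d)) : SimpleGraph (Fin n ⊕ Fin d) where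
  Adj := Adj T
  symm := ⟨by rintro (_ | _) (_ | _) h <;> exact h⟩
  loopless := ⟨by rintro (_ | _) h <;> exact h⟩

section typeGraph

variable {T : Fin n → Finset (Fin d)}

@[simp]
lemma typeGraph_adj_inl_inr {i : Fin n} {j : Fin d} :
    (typeGraph T).Adj (.inl i) (.inr j) ↔ j ∈ T i := .rfl

@[simp]
lemma typeGraph_adj_inr_inl {i : Fin n} {j : Fin d} :
    (typeGraph T).Adj (.inr j) (.inl i) ↔ j ∈ T i := .rfl

lemma isLeft_of_typeGraph_adj {u v : Fin n ⊕ Fin d} (h : (typeGraph T).Adj u v) :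
    v.isLeft = !u.isLeft := by
  rcases u with _ | _ <;> rcases v with _ | _ <;> first | rfl | exact h.elim

lemma isLeft_getVert_iff_even {x : Fin n} {v : Fin n ⊕ Fin d}
    (p : (typeGraph T).Walk (.inl x) v) {t : ℕ} (ht : t ≤ p.length) :
    (p.getVert t).isLeft ↔ Even t := by
  induction t with
  | zero => simp
  | succ t ih =>
    rw [isLeft_of_typeGraph_adj (p.adj_getVert_succ ht), Nat.even_add_one, ← ih (by omega)]
    simp

/-- The cycle has length `2 (m + 2)`; its vertices at even positions `2 s` give `L s`, those at
odd positions `2 s + 1` give `R s`, and position `2 (m + 2)` closes up at position `0`. -/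
lemma hasCycle_of_isCycle_inl {x : Fin n} {c : (typeGraph T).Walk (.inl x) (.inl x)}
    (hc : c.IsCycle) : HasCycle T := by
  obtain ⟨m, hm⟩ : ∃ m, c.length = 2 * (m + 2) := by
    obtain ⟨r, hr⟩ : Even c.length := by simpa using isLeft_getVert_iff_even c le_rfl
    exact ⟨r - 2, by have := hc.three_le_length; omega⟩
  have hL : ∀ s : Fin (m + 2), ∃ a, c.getVert (2 * s) = .inl a := fun s =>
    Sum.isLeft_iff.1 ((isLeft_getVert_iff_even c (by omega)).2 (even_two_mul _))
  have hR : ∀ s : Fin (m + 2), ∃ b, c.getVert (2 * s + 1) = .inr b := fun s =>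
    Sum.isRight_iff.1 (by
      simpa [Nat.not_even_iff_odd] using
        (isLeft_getVert_iff_even c (t := 2 * s + 1) (by omega)).not)
  choose L hL using hL
  choose R hR using hR
  have hinj : Set.InjOn c.getVert {t | t ≤ c.length - 1} := hc.getVert_injOn'
  refine ⟨m, L, R, fun s s' h => ?_, fun s s' h => ?_, fun s => ⟨?_, ?_⟩⟩
  · have := hinj (by simp; omega) (by simp; omega)
      (by rw [hL, hL, h] : c.getVert (2 * s) = c.getVert (2 * s'))
    exact Fin.ext (by omega)
  · have := hinj (by simp; omega) (by simp; omega)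
      (by rw [hR, hR, h] : c.getVert (2 * s + 1) = c.getVert (2 * s' + 1))
    exact Fin.ext (by omega)
  · simpa [hL, hR] using c.adj_getVert_succ (i := 2 * s) (by omega)
  · have hnext : c.getVert (2 * s + 1 + 1) = c.getVert (2 * (s + 1 : Fin (m + 2))) := by
      rw [Fin.val_add_one]
      split_ifs with hs
      · rw [hs, Fin.val_last, c.getVert_zero, c.getVert_of_length_le (by omega)]
      · rfl
    simpa [hR, hnext, hL] using c.adj_getVert_succ (i := 2 * s + 1) (by omega)

lemma isAcyclic_typeGraph (hT : ¬ HasCycle T) : (typeGraph T).IsAcyclic := by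
  rintro (x | y) c hc
  · exact hT (hasCycle_of_isCycle_inl hc)
  · obtain ⟨x, hx⟩ : ∃ x, c.snd = .inl x := by
      rw [← Sum.isLeft_iff, isLeft_of_typeGraph_adj (c.adj_snd hc.not_nil)]
      rfl
    have hmem : Sum.inl x ∈ c.support := hx ▸ c.getVert_mem_support 1
    exact hT (hasCycle_of_isCycle_inl (hc.rotate hmem))

lemma typeGraph_deleteEdge_le (i : Fin n) (k : Fin d) :
    typeGraph (DeleteEdge T i k) ≤ (typeGraph T).deleteEdges {s(.inl i, .inr k)} := by
  rintro (i' | j) (i'' | j') h <;>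
    simp only [typeGraph, Adj, DeleteEdge, Function.update_apply] at h <;>
    split_ifs at h <;> simp_all

lemma not_reachable_deleteEdge (hT : ¬ HasCycle T) {i : Fin n} {k : Fin d} (hk : k ∈ T i) :
    ¬ (typeGraph (DeleteEdge T i k)).Reachable (.inl i) (.inr k) := fun h =>
  SimpleGraph.isAcyclic_iff_forall_adj_isBridge.1 (isAcyclic_typeGraph hT)
    (typeGraph_adj_inl_inr.2 hk) (h.mono (typeGraph_deleteEdge_le i k))

lemma typeGraph_reachable_of_mem {i : Fin n} {j j' : Fin d} (hj : j ∈ T i) (hj' : j' ∈ T i) :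
    (typeGraph T).Reachable (.inr j) (.inr j') :=
  (typeGraph_adj_inr_inl.2 hj).reachable.trans (typeGraph_adj_inl_inr.2 hj').reachable

end typeGraph

lemma Surrounding.two_block_mem {M : Set (Fin n → Finset (Fin d))} (hM : Surrounding M)
    {A : Fin n → Finset (Fin d)} (hA : A ∈ M) (hAne : ∀ i, (A i).Nonempty)
    {S : Finset (Fin d)} (hS : S.Nonempty) (hSc : Sᶜ.Nonempty) :
    (fun i => if A i ⊆ S then A i else A i \ S) ∈ M := by
  have hP : IsOrderedPartition ![S, Sᶜ] := by
    refine ⟨Fin.forall_fin_two.2 ⟨hS, hSc⟩, ?_, fun j => ?_⟩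
    · simp [Fin.forall_fin_two, disjoint_compl_right, disjoint_compl_left]
    · by_cases hj : j ∈ S
      · exact ⟨0, hj⟩
      · exact ⟨1, by simpa using hj⟩
  convert hM A hA 2 ![S, Sᶜ] hP (fun i => if A i ⊆ S then 0 else 1) fun i => ?_ using 2 with i
  · split_ifs with h
    · exact (Finset.inter_eq_left.2 h).symm
    · simp [Finset.sdiff_eq_inter_compl]
  · split_ifs with h
    · refine ⟨by simpa [Finset.inter_eq_left.2 h] using hAne i,
        Fin.forall_fin_two.2 ⟨fun _ => le_rfl, ?_⟩⟩
      rintro ⟨x, hx⟩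
      simp only [Matrix.cons_val_one, Matrix.cons_val_zero, Finset.mem_inter,
        Finset.mem_compl] at hx
      exact absurd (h hx.1) hx.2
    · obtain ⟨x, hxA, hxS⟩ := Finset.not_subset.1 h
      exact ⟨⟨x, by simpa using ⟨hxA, hxS⟩⟩, fun s _ => Fin.le_last s⟩

/-- in a tropical oriented matroid, deleting one element from a
non-singleton coordinate of a cycle-free type yields again a type of the matroid. -/
theorem surrounding_delete_element {n d : ℕ}
    (M : Set (Fin n → Finset (Fin d))) (hM : IsTOM M)
    (A : Fin n → Finset (Fin d)) (hA : A ∈ M) (hacyc : ¬ HasCycle A)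
    (i : Fin n) (hi : 1 < (A i).card) (k : Fin d) (hk : k ∈ A i) :
    Function.update A i ((A i).erase k) ∈ M := by
  obtain ⟨hne, -, -, -, hsur⟩ := hM
  set B := DeleteEdge A i k
  set S := Finset.univ.filter fun j => (typeGraph B).Reachable (.inr j) (.inr k)
  have hkS : k ∈ S := by simp [S]
  have hAi_inter : ∀ j ∈ A i, j ∈ S → j = k := fun j hj hjS => by_contra fun hjk =>
    not_reachable_deleteEdge hacyc hk <|
      (typeGraph_adj_inl_inr.2 (by simp [DeleteEdge, hjk, hj])).reachable.trans
        (Finset.mem_filter.1 hjS).2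
  have hstar : ∀ i' ≠ i, ∀ j ∈ A i', j ∈ S → A i' ⊆ S := by
    intro i' hi' j hj hjS j' hj'
    have hB : B i' = A i' := Function.update_of_ne hi' _ _
    simp only [S, Finset.mem_filter, Finset.mem_univ, true_and] at hjS ⊢
    exact (typeGraph_reachable_of_mem (hB ▸ hj') (hB ▸ hj)).trans hjS
  obtain ⟨j₀, hj₀, hj₀k⟩ := Finset.exists_mem_ne hi k
  have hj₀S : j₀ ∉ S := fun h => hj₀k (hAi_inter j₀ hj₀ h)
  have hSc : Sᶜ.Nonempty := ⟨j₀, Finset.mem_compl.2 hj₀S⟩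
  convert hsur.two_block_mem hA (hne A hA) ⟨k, hkS⟩ hSc using 1
  funext i'
  rcases eq_or_ne i' i with rfl | hi'
  · rw [Function.update_self, if_neg fun h => hj₀S (h hj₀)]
    ext j
    simp only [Finset.mem_erase, Finset.mem_sdiff]
    exact ⟨fun ⟨hjk, hj⟩ => ⟨hj, fun hjS => hjk (hAi_inter j hj hjS)⟩,
      fun ⟨hj, hjS⟩ => ⟨fun hjk => hjS (hjk ▸ hkS), hj⟩⟩
  · rw [Function.update_of_ne hi', eq_comm, ite_eq_left_iff]
    exact fun hsub => Finset.sdiff_eq_self_of_disjoint <|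
      Finset.disjoint_left.2 fun j hj hjS => hsub (hstar i' hi' j hj hjS)

end TOMPaper
end

section
/- Let T=(T_1,…,T_n) be a spanning tree of K_{n,d} and let e be an edge of T whose left endpoint has degree at least 2 in T. Let I_e ⊆ [d] be the set of right vertices lying in the connected component of T∖e not containing the right vertex d, and let (J_1,…,J_n) be the coordinates of T∖e (so each J_k is nonempty). Then every point x in the Minkowski sum Δ_{J_1}+⋯+Δ_{J_n} ⊂ ℝ^d satisfies Σ_{j∈I_e} x_j = c, where c is the integer #{k∈[n] : J_k ⊆ I_e}; in particular, the face of the cell Δ_{T_1}+⋯+Δ_{T_n} corresponding to T∖e lies in the hyperplane Σ_{j∈I_e} x_j = c. -/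
open scoped Classical

namespace TOMPaper

variable {n d : ℕ}

/-!
Each `J k` is the neighbourhood of the left vertex `k` in `T ∖ e`, so it lies in a single
connected component; hence `J k ⊆ I_e` or `J k` is disjoint from `I_e`. The linear functional
`x ↦ ∑_{j ∈ I_e} x j` is therefore constantly `1` on `Δ_{J k}` in the first case and `0` in the
second, and summing over `k` gives its value on the Minkowski sum.
-/

theorem sum_eq_of_mem_simplexOf {I S : Finset (Fin d)} {c : ℝ}
    (hvert : ∀ i ∈ I, (if i ∈ S then (1 : ℝ) else 0) = c) {z : Fin d → ℝ}
    (hz : z ∈ simplexOf I) : ∑ j ∈ S, z j = c := by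
  have hlin : IsLinearMap ℝ (fun w : Fin d → ℝ => ∑ j ∈ S, w j) :=
    ⟨fun a b => by simp [Finset.sum_add_distrib], fun r a => by simp [Finset.mul_sum]⟩
  refine convexHull_min ?_ (convex_hyperplane hlin c) hz
  rintro w ⟨i, hi, rfl⟩
  simpa [Pi.single_apply] using hvert i hi

theorem sum_eq_card_of_mem_cell {J : Fin n → Finset (Fin d)} {S : Finset (Fin d)}
    (hJ : ∀ k, J k ⊆ S ∨ Disjoint (J k) S) {x : Fin d → ℝ} (hx : x ∈ cell J) :
    ∑ j ∈ S, x j = ((Finset.univ.filter (fun k : Fin n => J k ⊆ S)).card : ℝ) := by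
  obtain ⟨y, hy, rfl⟩ := hx
  have hterm : ∀ k, ∑ j ∈ S, y k j = if J k ⊆ S then 1 else 0 := by
    intro k
    refine sum_eq_of_mem_simplexOf (fun i hi => ?_) (hy k)
    by_cases hsub : J k ⊆ S
    · simp [hsub, hsub hi]
    · simp [hsub, Finset.disjoint_left.mp ((hJ k).resolve_left hsub) hi]
  simp only [Finset.sum_apply]
  rw [Finset.sum_comm, Finset.sum_congr rfl (fun k _ => hterm k), Finset.sum_boole]

theorem reflTransGen_adj_of_mem {T : Fin n → Finset (Fin d)} {k : Fin n} {j j' : Fin d}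
    (hj : j ∈ T k) (hj' : j' ∈ T k) :
    Relation.ReflTransGen (Adj T) (Sum.inr j) (Sum.inr j') :=
  .head (show Adj T (Sum.inr j) (Sum.inl k) from hj)
    (.single (show Adj T (Sum.inl k) (Sum.inr j') from hj'))

theorem subset_or_disjoint_of_forall_mem_iff_not_reachable {T : Fin n → Finset (Fin d)}
    {S : Finset (Fin d)} {v : Fin n ⊕ Fin d}
    (hS : ∀ j, j ∈ S ↔ ¬ Relation.ReflTransGen (Adj T) (Sum.inr j) v) (k : Fin n) :
    T k ⊆ S ∨ Disjoint (T k) S := by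
  by_contra! h
  obtain ⟨j, hjT, hjS⟩ := Finset.not_subset.mp h.1
  obtain ⟨j', hj'T, hj'S⟩ := Finset.not_disjoint_iff.mp h.2
  have hj_reach : Relation.ReflTransGen (Adj T) (Sum.inr j) v := not_not.mp (mt (hS j).mpr hjS)
  exact (hS j').mp hj'S ((reflTransGen_adj_of_mem hj'T hjT).trans hj_reach)

/-- the facet of a fine cell obtained by deleting an edge `e = (i₀, j₀)`
(whose left endpoint has degree at least `2`) lies in the hyperplane
`Σ_{j ∈ I_e} x j = #{k : J k ⊆ I_e}`. -/
theorem facet_in_hyperplane {n d : ℕ} (hd : 0 < d)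
    (T : Fin n → Finset (Fin d))
    (i0 : Fin n) (j0 : Fin d)
    (Ie : Finset (Fin d))
    (hIe : ∀ j : Fin d, j ∈ Ie ↔
      ¬ Relation.ReflTransGen (Adj (DeleteEdge T i0 j0))
        (Sum.inr j) (Sum.inr ⟨d - 1, by omega⟩)) :
    ∀ x ∈ cell (DeleteEdge T i0 j0),
      ∑ j ∈ Ie, x j =
        ((Finset.univ.filter (fun k : Fin n => DeleteEdge T i0 j0 k ⊆ Ie)).card : ℝ) :=
  fun _ hx => sum_eq_card_of_mem_cell (subset_or_disjoint_of_forall_mem_iff_not_reachable hIe) hx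

end TOMPaper
end

section
/- Let T be a spanning tree of K_{n,d}. Let E' be the set of edges of T whose left endpoint has degree at least 2 in T, and for e∈E' let I_e ⊆ [d]∖{d} be the set of right vertices lying in the connected component of T∖e not containing the right vertex d. Then the {0,1}-matrix Y with rows indexed by E' and columns indexed by [d−1], defined by Y_{e,j}=1 if j∈I_e and Y_{e,j}=0 otherwise, is totally unimodular. -/
/-! The square submatrices of `Y` are incidence matrices of laminar families, and such a
matrix has determinant `0` or `±1`: an inclusion-minimal row is either empty, or contains two
elements whose columns coincide, or is a single element, and expanding along it leaves a
smaller laminar incidence matrix.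

The sets `I_e` (more generally, the far sides `{u | u cannot reach v in T ∖ e}` of the edges of
a connected graph `T` with respect to a root `v`) form a laminar family. For edges `e ≠ e'`: if
an endpoint of `e'` is cut off from `v` by `e`, then so is all of `e'` together with its far
side, giving `I_{e'} ⊆ I_e`; symmetrically; and otherwise each edge lies on the root side of the
other, and a vertex cut off by `e` is joined to `v` through an endpoint of `e` along a path
avoiding `e'`, so `I_e ∩ I_{e'} = ∅`. -/

open scoped Classical

namespace TOMPaper

variable {n d : ℕ}

def IsLaminar {ι α : Type*} (J : ι → Set α) : Prop :=
  ∀ p q, J p ⊆ J q ∨ J q ⊆ J p ∨ Disjoint (J p) (J q)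

noncomputable def indicatorMatrix {ι α : Type*} (R : Type*) [Zero R] [One R] (J : ι → Set α) :
    Matrix ι α R :=
  Matrix.of fun p a => if a ∈ J p then 1 else 0

section Laminar

variable {ι ι' α β : Type*} {J : ι → Set α}

lemma IsLaminar.preimage (hJ : IsLaminar J) (f : ι' → ι) (g : β → α) :
    IsLaminar fun p => g ⁻¹' J (f p) := by
  intro p q
  rcases hJ (f p) (f q) with h | h | h
  · exact .inl (Set.preimage_mono h)
  · exact .inr (.inl (Set.preimage_mono h))
  · exact .inr (.inr (h.preimage g))

lemma IsLaminar.exists_minimal [Fintype ι] [Nonempty ι] [Finite α] (hJ : IsLaminar J) :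
    ∃ r, ∀ p, J r ⊆ J p ∨ Disjoint (J r) (J p) := by
  obtain ⟨r, -, hr⟩ := Finset.exists_min_image Finset.univ (fun p => (J p).ncard)
    Finset.univ_nonempty
  refine ⟨r, fun p => ?_⟩
  rcases hJ r p with h | h | h
  · exact .inl h
  · exact .inl (Set.eq_of_subset_of_ncard_le h (hr p (Finset.mem_univ p))).ge
  · exact .inr h

end Laminar

lemma det_indicatorMatrix_of_isLaminar {R : Type*} [CommRing R] :
    ∀ (k : ℕ) (J : Fin k → Set (Fin k)), IsLaminar J →
      (indicatorMatrix R J).det = 0 ∨ (indicatorMatrix R J).det = 1 ∨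
        (indicatorMatrix R J).det = -1
  | 0, J, _ => .inr (.inl (Matrix.det_isEmpty))
  | k + 1, J, hJ => by
    obtain ⟨r, hr⟩ := hJ.exists_minimal
    rcases (J r).eq_empty_or_nonempty with hempty | ⟨c, hc⟩
    · exact .inl (Matrix.det_eq_zero_of_row_eq_zero r fun q => by simp [indicatorMatrix, hempty])
    by_cases hbig : ∃ c' ∈ J r, c' ≠ c
    · obtain ⟨c', hc', hne⟩ := hbig
      refine .inl (Matrix.det_zero_of_column_eq hne fun p => ?_)
      rcases hr p with h | h
      · simp [indicatorMatrix, h hc, h hc']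
      · simp [indicatorMatrix, h.notMem_of_mem_left hc, h.notMem_of_mem_left hc']
    push Not at hbig
    have hrow : ∀ q, indicatorMatrix R J r q = if q = c then 1 else 0 := fun q => by
      by_cases hq : q = c
      · simp [indicatorMatrix, hq, hc]
      · have hq' : q ∉ J r := fun h => hq (hbig q h)
        simp [indicatorMatrix, hq, hq']
    have hminor : (indicatorMatrix R J).submatrix r.succAbove c.succAbove =
        indicatorMatrix R fun p => c.succAbove ⁻¹' J (r.succAbove p) := rfl
    have hexpand : (indicatorMatrix R J).det = (-1) ^ (r + c : ℕ) *
        (indicatorMatrix R fun p => c.succAbove ⁻¹' J (r.succAbove p)).det := by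
      rw [Matrix.det_succ_row _ r, Finset.sum_eq_single c (fun q _ hq => by simp [hrow, hq])
        (by simp), hrow, if_pos rfl, mul_one, hminor]
    rw [hexpand]
    rcases det_indicatorMatrix_of_isLaminar (R := R) k _
        (hJ.preimage r.succAbove c.succAbove) with h | h | h <;>
    rcases neg_one_pow_eq_or R (r + c : ℕ) with hs | hs <;> simp [h, hs]

lemma isTU_indicatorMatrix {ι α : Type*} {J : ι → Set α} (hJ : IsLaminar J) :
    IsTU (indicatorMatrix ℚ J) := fun k f g _ _ =>
  det_indicatorMatrix_of_isLaminar k _ (hJ.preimage f g)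

open Relation

lemma reflTransGen_or_through_edge {α : Type*} {r s : α → α → Prop} {a b : α}
    (hrs : ∀ x y, r x y → s x y ∨ (x = a ∧ y = b) ∨ (x = b ∧ y = a)) {u w : α}
    (h : ReflTransGen r u w) :
    ReflTransGen s u w ∨ (ReflTransGen s u a ∧ ReflTransGen s b w) ∨
      (ReflTransGen s u b ∧ ReflTransGen s a w) := by
  induction h with
  | refl => exact .inl .refl
  | tail _ hxy ih =>
    rcases hrs _ _ hxy with hs | ⟨rfl, rfl⟩ | ⟨rfl, rfl⟩
    · rcases ih with h | ⟨h₁, h₂⟩ | ⟨h₁, h₂⟩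
      · exact .inl (h.tail hs)
      · exact .inr (.inl ⟨h₁, h₂.tail hs⟩)
      · exact .inr (.inr ⟨h₁, h₂.tail hs⟩)
    · rcases ih with h | ⟨h₁, -⟩ | ⟨h₁, -⟩
      · exact .inr (.inl ⟨h, .refl⟩)
      · exact .inr (.inl ⟨h₁, .refl⟩)
      · exact .inl h₁
    · rcases ih with h | ⟨h₁, -⟩ | ⟨h₁, -⟩
      · exact .inr (.inr ⟨h, .refl⟩)
      · exact .inl h₁
      · exact .inr (.inr ⟨h₁, .refl⟩)

abbrev Reach (S : Fin n → Finset (Fin d)) : Fin n ⊕ Fin d → Fin n ⊕ Fin d → Prop :=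
  ReflTransGen (Adj S)

def farSide (S : Fin n → Finset (Fin d)) (v : Fin n ⊕ Fin d) : Set (Fin n ⊕ Fin d) :=
  {u | ¬ Reach S u v}

section Graph

variable {S S' : Fin n → Finset (Fin d)} {i i' : Fin n} {j j' : Fin d}
  {u v w : Fin n ⊕ Fin d}

instance (S : Fin n → Finset (Fin d)) : Std.Symm (Adj S) where
  symm u w h := by cases u <;> cases w <;> exact h

lemma reach_symm (h : Reach S u w) : Reach S w u := symm h

lemma reach_mono (hS : ∀ i, S i ⊆ S' i) (h : Reach S u w) : Reach S' u w := by
  refine ReflTransGen.mono (fun x y (hxy : Adj S x y) => ?_) _ _ h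
  cases x <;> cases y <;> first | exact hS _ hxy | exact hxy

lemma mem_deleteEdge : j' ∈ DeleteEdge S i j i' ↔ j' ∈ S i' ∧ (i', j') ≠ (i, j) := by
  rcases eq_or_ne i' i with rfl | h
  · simp [DeleteEdge, and_comm]
  · simp [DeleteEdge, h]

lemma deleteEdge_subset : ∀ i', DeleteEdge S i j i' ⊆ S i' :=
  fun _ _ h => (mem_deleteEdge.mp h).1

lemma deleteEdge_mono (hS : ∀ i, S i ⊆ S' i) : ∀ i', DeleteEdge S i j i' ⊆ DeleteEdge S' i j i' :=
  fun _ _ h => mem_deleteEdge.mpr ⟨hS _ (mem_deleteEdge.mp h).1, (mem_deleteEdge.mp h).2⟩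

lemma adj_deleteEdge_of_ne (hj' : j' ∈ S i') (hne : (i', j') ≠ (i, j)) :
    Adj (DeleteEdge S i j) (.inl i') (.inr j') :=
  mem_deleteEdge.mpr ⟨hj', hne⟩

lemma adj_deleteEdge_or {x y : Fin n ⊕ Fin d} (h : Adj S x y) :
    Adj (DeleteEdge S i j) x y ∨ (x = .inl i ∧ y = .inr j) ∨ (x = .inr j ∧ y = .inl i) := by
  cases x <;> cases y <;> simp_all [Adj, mem_deleteEdge, and_comm, or_iff_not_imp_left]

lemma reach_deleteEdge_or (h : Reach S u w) :
    Reach (DeleteEdge S i j) u w ∨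
      (Reach (DeleteEdge S i j) u (.inl i) ∧ Reach (DeleteEdge S i j) (.inr j) w) ∨
      (Reach (DeleteEdge S i j) u (.inr j) ∧ Reach (DeleteEdge S i j) (.inl i) w) :=
  reflTransGen_or_through_edge (fun _ _ => adj_deleteEdge_or) h

lemma reach_deleteEdge_of_not_reach (h : Reach S u w) (hi : ¬ Reach S (.inl i) w)
    (hj : ¬ Reach S (.inr j) w) : Reach (DeleteEdge S i j) u w := by
  rcases reach_deleteEdge_or (i := i) (j := j) h with h | ⟨-, h⟩ | ⟨-, h⟩
  · exact h
  · exact absurd (reach_mono deleteEdge_subset h) hj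
  · exact absurd (reach_mono deleteEdge_subset h) hi

lemma farSide_subset_farSide (hj' : j' ∈ S i') (hne : (i', j') ≠ (i, j))
    (h : ¬ Reach (DeleteEdge S i j) (.inl i') v) :
    farSide (DeleteEdge S i' j') v ⊆ farSide (DeleteEdge S i j) v := by
  intro u hu hreach
  have hj'v : ¬ Reach (DeleteEdge S i j) (.inr j') v := fun h' =>
    h (.head (adj_deleteEdge_of_ne hj' hne) h')
  exact hu (reach_mono (deleteEdge_mono deleteEdge_subset)
    (reach_deleteEdge_of_not_reach hreach h hj'v))

lemma disjoint_farSide (hconn : ∀ u, Reach S u v) (hj : j ∈ S i) (hj' : j' ∈ S i')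
    (hne : (i', j') ≠ (i, j)) (h₁ : Reach (DeleteEdge S i j) (.inl i') v)
    (h₂ : Reach (DeleteEdge S i' j') (.inl i) v) :
    Disjoint (farSide (DeleteEdge S i j) v) (farSide (DeleteEdge S i' j') v) := by
  rw [Set.disjoint_left]
  intro u hu₁ hu₂
  -- `x` is the endpoint of `(i, j)` through which a path from `u` to `v` in `S` leaves the far
  -- side of `(i, j)`; the endpoints of `(i', j')` are not on that side.
  have hcross : ∀ x, Reach (DeleteEdge S i j) u x → Reach (DeleteEdge S i' j') x v → False := by
    intro x hux hxv
    have hx : ∀ y, Reach (DeleteEdge S i j) y v → ¬ Reach (DeleteEdge S i j) y x :=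
      fun y hy hyx => hu₁ (hux.trans ((reach_symm hyx).trans hy))
    have hu₂x := reach_deleteEdge_of_not_reach hux (hx _ h₁)
      (hx _ (.head (symm (adj_deleteEdge_of_ne hj' hne)) h₁))
    exact hu₂ ((reach_mono (deleteEdge_mono deleteEdge_subset) hu₂x).trans hxv)
  rcases reach_deleteEdge_or (i := i) (j := j) (hconn u) with h | ⟨hux, -⟩ | ⟨hux, -⟩
  · exact hu₁ h
  · exact hcross _ hux h₂
  · exact hcross _ hux (.head (symm (adj_deleteEdge_of_ne hj hne.symm)) h₂)

lemma isLaminar_farSide (hconn : ∀ u, Reach S u v) :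
    IsLaminar fun e : {e : Fin n × Fin d // e.2 ∈ S e.1} =>
      farSide (DeleteEdge S e.1.1 e.1.2) v := by
  rintro ⟨⟨i, j⟩, hj⟩ ⟨⟨i', j'⟩, hj'⟩
  by_cases hne : (i', j') = (i, j)
  · cases hne
    exact .inl subset_rfl
  by_cases h₁ : Reach (DeleteEdge S i j) (.inl i') v
  · by_cases h₂ : Reach (DeleteEdge S i' j') (.inl i) v
    · exact .inr (.inr (disjoint_farSide hconn hj hj' hne h₁ h₂))
    · exact .inl (farSide_subset_farSide hj (Ne.symm hne) h₂)
  · exact .inr (.inl (farSide_subset_farSide hj' hne h₁))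

end Graph

/-- the 0/1 matrix whose rows are the indicator vectors (on `[d-1]`)
of the sets `I_e`, over edges `e` of the spanning tree `T` whose left endpoint
has degree at least `2`, is totally unimodular. -/
theorem cell_matrix_TU {n d : ℕ} (hd : 0 < d)
    (T : Fin n → Finset (Fin d)) (hT : IsSpanningTree T)
    (Y : Matrix {p : Fin n × Fin d // p.2 ∈ T p.1 ∧ 2 ≤ (T p.1).card} (Fin (d - 1)) ℚ)
    (hY : ∀ e j, Y e j =
      if (Fin.castLE (Nat.sub_le d 1) j : Fin d) ∈
          OppComponent (DeleteEdge T e.1.1 e.1.2) ⟨d - 1, by omega⟩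
      then 1 else 0) :
    IsTU Y := by
  rw [show Y = indicatorMatrix ℚ fun e => Fin.castLE (Nat.sub_le d 1) ⁻¹'
      OppComponent (DeleteEdge T e.1.1 e.1.2) ⟨d - 1, by omega⟩ from Matrix.ext hY]
  exact isTU_indicatorMatrix ((isLaminar_farSide (v := .inr ⟨d - 1, by omega⟩)
    fun u => hT.1 u _).preimage
      (fun e : {p : Fin n × Fin d // p.2 ∈ T p.1 ∧ 2 ≤ (T p.1).card} => ⟨e.1, e.2.1⟩)
      (Sum.inr ∘ Fin.castLE (Nat.sub_le d 1)))

end TOMPaper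
end

section
/- Let Y be an m×n matrix with entries in {0,1} such that for any two rows, their supports (the sets of columns where the entry is 1) are comparable (one contains the other) or disjoint. Then there is a permutation of the columns of Y after which every row has its 1's in consecutive positions; consequently, Y is totally unimodular. -/
open scoped Classical

namespace TOMPaper

variable {n d : ℕ}

/-!
Sort the rows by decreasing support size and the columns lexicographically by their membership
vectors in the sorted rows. If a support `S` contained columns `c₁ < c₃` but not some `c₂` in
between, the first row distinguishing `c₂` from `c₁` or from `c₃` would have a support that meets
`S` without being nested with it, or one inside `S` that precedes `S` and is strictly smaller.

For total unimodularity, take a square submatrix with its columns in increasing order and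
subtract from every column the next one, a unitriangular change that keeps the determinant.
Each row `𝟙_[a, b]` becomes `𝟙_b - 𝟙_(a-1)`. Expanding along a row with at most one nonzero
entry gives induction on the size; if there is no such row, every row sums to zero.
-/

open Matrix

theorem subsingleton_of_forall_not_lt {α : Type*} [LinearOrder α] {s : Set α}
    (h : ∀ a ∈ s, ∀ b ∈ s, ¬ a < b) : s.Subsingleton :=
  fun a ha b hb => le_antisymm (not_lt.1 (h b hb a ha)) (not_lt.1 (h a ha b hb))

section TotallyUnimodular

variable {R : Type*} [CommRing R]

/-- For example, the transpose of the incidence matrix of a directed graph. -/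
def IsRowwiseUnitDiff {ι κ : Type*} (M : Matrix ι κ R) : Prop :=
  ∀ i, ∃ s t : Set κ, s.Subsingleton ∧ t.Subsingleton ∧ M i = s.indicator 1 - t.indicator 1

theorem IsRowwiseUnitDiff.submatrix {ι κ ι' κ' : Type*} {M : Matrix ι κ R}
    (hM : IsRowwiseUnitDiff M) (f : ι' → ι) {g : κ' → κ} (hg : g.Injective) :
    IsRowwiseUnitDiff (M.submatrix f g) := by
  intro i
  obtain ⟨s, t, hs, ht, hrow⟩ := hM (f i)
  refine ⟨g ⁻¹' s, g ⁻¹' t, hs.preimage hg, ht.preimage hg, ?_⟩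
  ext j
  simp [hrow, Set.indicator_apply]

theorem det_mem_range_signType_of_row_eq_smul_indicator {k : ℕ}
    (M : Matrix (Fin (k + 1)) (Fin (k + 1)) R) (i : Fin (k + 1)) (c : SignType)
    {u : Set (Fin (k + 1))} (hu : u.Subsingleton) (hrow : M i = (c : R) • u.indicator 1)
    (hminor : ∀ j : Fin (k + 1),
      (M.submatrix i.succAbove j.succAbove).det ∈ Set.range SignType.cast) :
    M.det ∈ Set.range SignType.cast := by
  obtain rfl | ⟨a, rfl⟩ := hu.eq_empty_or_singleton
  · exact ⟨0, (det_eq_zero_of_row_eq_zero i fun j => by simp [hrow]).symm⟩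
  obtain ⟨e, he⟩ := hminor a
  refine ⟨(-1) ^ (i + a : ℕ) * c * e, ?_⟩
  rw [det_succ_row M i, Finset.sum_eq_single a (fun j _ hj => by simp [hrow, hj]) (by simp)]
  simp [hrow, he]

theorem IsRowwiseUnitDiff.det_mem_range_signType :
    ∀ {k : ℕ} {M : Matrix (Fin k) (Fin k) R}, IsRowwiseUnitDiff M →
      M.det ∈ Set.range SignType.cast
  | 0, M, _ => ⟨1, by simp⟩
  | k + 1, M, hM => by
    have hminor (i j : Fin (k + 1)) :=
      ((hM.submatrix i.succAbove (Fin.succAbove_right_injective (p := j))).det_mem_range_signType)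
    choose s t hs ht hrow using hM
    by_cases hboth : ∀ i, (s i).Nonempty ∧ (t i).Nonempty
    · refine ⟨0, (det_eq_zero_of_mulVec_eq_zero_of_mem_nonZeroDivisors (v := 1) (i := 0) ?_
        (one_mem _)).symm⟩
      ext i
      obtain ⟨⟨a, ha⟩, ⟨b, hb⟩⟩ := hboth i
      have hrowi := hrow i
      rw [(hs i).eq_singleton_of_mem ha, (ht i).eq_singleton_of_mem hb] at hrowi
      simp [mulVec, dotProduct, hrowi, Finset.sum_sub_distrib]
    · obtain ⟨i, hi⟩ := not_forall.1 hboth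
      rcases not_and_or.1 hi with hsi | hti
      · rw [Set.not_nonempty_iff_eq_empty] at hsi
        exact det_mem_range_signType_of_row_eq_smul_indicator M i (-1) (ht i)
          (by ext; simp [hrow, hsi]) (hminor i)
      · rw [Set.not_nonempty_iff_eq_empty] at hti
        exact det_mem_range_signType_of_row_eq_smul_indicator M i 1 (hs i)
          (by ext; simp [hrow, hti]) (hminor i)

theorem sum_indicator_mul_ite_covBy {α : Type*} [Fintype α] [LinearOrder α] (s : Set α)
    (j : α) :
    ∑ l, s.indicator (1 : α → R) l * (if j ⋖ l then 1 else 0) =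
      {j | ∃ l ∈ s, j ⋖ l}.indicator 1 j := by
  by_cases h : ∃ l ∈ s, j ⋖ l
  · obtain ⟨l, hl, hjl⟩ := h
    rw [Finset.sum_eq_single l (fun l' _ hl' => ?_) (by simp),
      Set.indicator_of_mem (show j ∈ {j | ∃ l ∈ s, j ⋖ l} from ⟨l, hl, hjl⟩)]
    · simp [hl, hjl]
    · rw [if_neg fun h => hl' (h.unique_right hjl), mul_zero]
  · rw [Set.indicator_of_notMem (show j ∉ {j | ∃ l ∈ s, j ⋖ l} from h)]
    refine Finset.sum_eq_zero fun l _ => ?_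
    by_cases hl : l ∈ s
    · rw [if_neg fun hjl => h ⟨l, hl, hjl⟩, mul_zero]
    · rw [Set.indicator_of_notMem hl, zero_mul]

theorem det_mem_range_signType_of_ordConnected {k : ℕ} (S : Fin k → Set (Fin k))
    (hS : ∀ i, (S i).OrdConnected) :
    (Matrix.of fun i j => (S i).indicator (1 : Fin k → R) j).det ∈ Set.range SignType.cast := by
  set M : Matrix (Fin k) (Fin k) R := Matrix.of fun i j => (S i).indicator 1 j
  set P : Matrix (Fin k) (Fin k) R := Matrix.of fun l j => if j ⋖ l then 1 else 0
  have hdet : (1 - P).det = 1 := by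
    rw [det_of_isLowerTriangular _ fun l j (hlj : l < j) => ?_]
    · simp [P]
    · simp only [P, Matrix.sub_apply, one_apply_ne hlj.ne, of_apply,
        if_neg fun h : j ⋖ l => lt_asymm h.lt hlj, sub_zero]
  have hMP : IsRowwiseUnitDiff (M * (1 - P)) := by
    intro i
    set T := {j | ∃ l ∈ S i, j ⋖ l}
    refine ⟨S i \ T, T \ S i, ?_, ?_, ?_⟩
    · refine subsingleton_of_forall_not_lt fun a ha b hb hab => ?_
      obtain ⟨l, hal, hlb⟩ := exists_covBy_le_of_lt hab
      exact ha.2 ⟨l, (hS i).out ha.1 hb.1 ⟨hal.le, hlb⟩, hal⟩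
    · refine subsingleton_of_forall_not_lt fun a ha b hb hab => ?_
      obtain ⟨la, hla, hala⟩ := ha.1
      obtain ⟨lb, hlb, hblb⟩ := hb.1
      exact hb.2 ((hS i).out hla hlb ⟨hala.ge_of_gt hab, hblb.le⟩)
    · ext j
      have hrow : (M * P) i j = T.indicator 1 j := sum_indicator_mul_ite_covBy (S i) j
      rw [mul_sub, mul_one, Matrix.sub_apply, Pi.sub_apply, hrow]
      by_cases hjS : j ∈ S i <;> by_cases hjT : j ∈ T <;> simp [M, hjS, hjT]
  have := hMP.det_mem_range_signType
  rwa [det_mul, hdet, mul_one] at this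

theorem isTotallyUnimodular_of_ordConnected {ι α : Type*} [LinearOrder α] (S : ι → Set α)
    (hS : ∀ i, (S i).OrdConnected) :
    (Matrix.of fun i j => (S i).indicator (1 : α → R) j).IsTotallyUnimodular := by
  intro k f g _ hg
  set τ := Tuple.sort g
  have hsorted : StrictMono (g ∘ τ) :=
    (Tuple.monotone_sort g).strictMono_of_injective (hg.comp τ.injective)
  obtain ⟨e, he⟩ := det_mem_range_signType_of_ordConnected (R := R)
    (fun i => g ∘ τ ⁻¹' S (f i)) fun i => (hS (f i)).preimage_mono hsorted.monotone
  have hperm : (Matrix.of fun i j => (S i).indicator (1 : α → R) j).submatrix f g =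
      (Matrix.of fun i j => (g ∘ τ ⁻¹' S (f i)).indicator 1 j).submatrix id τ.symm := by
    ext i j
    simp [Set.indicator_apply]
  rw [hperm, det_permute', ← he]
  rcases Int.units_eq_one_or (Equiv.Perm.sign τ.symm) with h | h
  · exact ⟨e, by simp [h]⟩
  · exact ⟨-e, by simp [h]⟩

end TotallyUnimodular

section Laminar

variable {α : Type*} {m : ℕ}

noncomputable def membershipLex (T : Fin m → Set α) (c : α) : Lex (Fin m → Bool) :=
  toLex fun t => decide (c ∈ T t)

theorem membershipLex_lt_iff {T : Fin m → Set α} {a b : α} :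
    membershipLex T a < membershipLex T b ↔
      ∃ t, (∀ s < t, (a ∈ T s ↔ b ∈ T s)) ∧ a ∉ T t ∧ b ∈ T t := by
  refine exists_congr fun t => and_congr (forall₂_congr fun s _ => decide_eq_decide) ?_
  change decide (a ∈ T t) < decide (b ∈ T t) ↔ _
  simp [Bool.lt_iff]

theorem mem_iff_of_membershipLex_eq {T : Fin m → Set α} {a b : α}
    (h : membershipLex T a = membershipLex T b) (t : Fin m) : a ∈ T t ↔ b ∈ T t :=
  decide_eq_decide.1 (congrFun (toLex.injective h) t)

theorem mem_of_membershipLex_le_of_le [Finite α] {T : Fin m → Set α}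
    (hT : ∀ i i', T i ⊆ T i' ∨ T i' ⊆ T i ∨ Disjoint (T i) (T i'))
    (hcard : Antitone fun t => (T t).ncard) {p : Fin m} {c₁ c₂ c₃ : α}
    (h₁₂ : membershipLex T c₁ ≤ membershipLex T c₂)
    (h₂₃ : membershipLex T c₂ ≤ membershipLex T c₃)
    (h₁ : c₁ ∈ T p) (h₃ : c₃ ∈ T p) : c₂ ∈ T p := by
  by_contra h₂
  obtain ⟨a, ha, h₁a, h₂a⟩ :=
    membershipLex_lt_iff.1 (h₁₂.lt_of_ne fun h => h₂ ((mem_iff_of_membershipLex_eq h p).1 h₁))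
  obtain ⟨b, hb, h₂b, h₃b⟩ :=
    membershipLex_lt_iff.1 (h₂₃.lt_of_ne fun h => h₂ ((mem_iff_of_membershipLex_eq h p).2 h₃))
  rcases lt_trichotomy a b with hab | rfl | hba
  · have h₃a : c₃ ∈ T a := (hb a hab).1 h₂a
    rcases hT a p with h | h | h
    · exact h₂ (h h₂a)
    · exact h₁a (h h₁)
    · exact Set.disjoint_left.1 h h₃a h₃
  · exact h₂b h₂a
  · have h₁b : c₁ ∉ T b := fun h => h₂b ((ha b hba).1 h)
    have hbp : b ≤ p := le_of_not_gt fun hpb => h₂ ((hb p hpb).2 h₃)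
    rcases hT b p with h | h | h
    · exact h₁b (Set.eq_of_subset_of_ncard_le h (hcard hbp) ▸ h₁)
    · exact h₁b (h h₁)
    · exact Set.disjoint_left.1 h h₃b h₃

theorem exists_perm_ordConnected_preimage_of_laminar {n : ℕ} (S : Fin m → Set (Fin n))
    (hS : ∀ i i', S i ⊆ S i' ∨ S i' ⊆ S i ∨ Disjoint (S i) (S i')) :
    ∃ σ : Equiv.Perm (Fin n), ∀ i, (σ ⁻¹' S i).OrdConnected := by
  set ρ := Tuple.sort fun i => OrderDual.toDual (S i).ncard
  have hρ : Antitone fun t => (S (ρ t)).ncard := fun t t' h =>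
    OrderDual.toDual_le_toDual.1 (Tuple.monotone_sort (fun i => OrderDual.toDual (S i).ncard) h)
  refine ⟨Tuple.sort (membershipLex (S ∘ ρ)), fun i => ⟨fun j₁ h₁ j₃ h₃ j₂ hj₂ => ?_⟩⟩
  have hmono := Tuple.monotone_sort (membershipLex (S ∘ ρ))
  simpa using mem_of_membershipLex_le_of_le (fun t t' => hS (ρ t) (ρ t')) hρ (p := ρ.symm i)
    (hmono hj₂.1) (hmono hj₂.2) (by simpa using h₁) (by simpa using h₃)

end Laminar

/-- a 0/1 matrix whose row supports are pairwise comparable or disjoint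
can be turned into an interval matrix by a column permutation; consequently it is
totally unimodular. -/
theorem laminar_matrix_interval_and_TU {m n : ℕ} (Y : Matrix (Fin m) (Fin n) ℚ)
    (h01 : ∀ i j, Y i j = 0 ∨ Y i j = 1)
    (hsupp : ∀ i i' : Fin m,
      {j | Y i j = 1} ⊆ {j | Y i' j = 1} ∨
      {j | Y i' j = 1} ⊆ {j | Y i j = 1} ∨
      Disjoint {j | Y i j = 1} {j | Y i' j = 1}) :
    (∃ σ : Equiv.Perm (Fin n), ∀ i : Fin m, ∀ j1 j2 j3 : Fin n,
      j1 ≤ j2 → j2 ≤ j3 → Y i (σ j1) = 1 → Y i (σ j3) = 1 → Y i (σ j2) = 1) ∧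
    IsTU Y := by
  obtain ⟨σ, hσ⟩ := exists_perm_ordConnected_preimage_of_laminar (fun i => {j | Y i j = 1}) hsupp
  refine ⟨⟨σ, fun i j₁ j₂ j₃ h₁₂ h₂₃ h₁ h₃ => (hσ i).out h₁ h₃ ⟨h₁₂, h₂₃⟩⟩, ?_⟩
  have hY : Y =
      (Matrix.of fun i j => (σ ⁻¹' {j | Y i j = 1}).indicator 1 j).submatrix id σ.symm := by
    ext i j
    rcases h01 i j with h | h <;> simp [Set.indicator_apply, h]
  have hTU : Y.IsTotallyUnimodular := by
    rw [hY]
    exact (isTotallyUnimodular_of_ordConnected _ hσ).submatrix id σ.symm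
  intro k f g hf hg
  obtain ⟨s, hs⟩ := hTU k f g hf hg
  cases s <;> simp [← hs]

end TOMPaper
end

section
/- Let T=(T_1,…,T_n) be a spanning tree of K_{n,d}, let P = Δ_{T_1}+⋯+Δ_{T_n} ⊂ ℝ^d, and let a=(a_1,…,a_d)∈ℤ^d. If the set P' = P ∩ {x∈ℝ^d : x_j ≥ a_j for all j∈[d]} is nonempty, then P' is a polytope all of whose vertices are integer points. -/
open scoped Classical

namespace TOMPaper

variable {n d : ℕ}

/-!
`cell T ∩ {x | a ≤ x}` is the image, under summing the rows, of the compact convex set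
`cellLift T a` of matrices whose `i`-th row lies in `Δ_{T i}` and whose column sums are at least
`a`. An extreme point `y` of `cellLift T a` is integral: otherwise its non-integral entries meet no
row, and no column whose sum equals its bound, exactly once, and counting dimensions gives a
nonzero `Z` supported on those entries with zero row sums and zero sums on those columns; then
`y ± t • Z` lies in `cellLift T a` for small `t`. By Krein–Milman `cellLift T a` is the convex hull
of its finitely many integral points, so its image is the convex hull of integral points.
-/

open Finset Filter Topology

theorem card_filter_notMem_ne_one {α M : Type*} [AddCommGroup M] (H : AddSubgroup M)
    {s : Finset α} {f : α → M} (hs : ∑ a ∈ s, f a ∈ H) : #{a ∈ s | f a ∉ H} ≠ 1 := by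
  intro h
  obtain ⟨a, ha⟩ := card_eq_one.1 h
  obtain ⟨has, hfa⟩ : a ∈ s ∧ f a ∉ H := mem_filter.1 (ha ▸ mem_singleton_self a)
  have hrest : ∑ b ∈ s.erase a, f b ∈ H := by
    refine H.sum_mem fun b hb => ?_
    by_contra hfb
    have : b ∈ ({a} : Finset α) := ha ▸ mem_filter.2 ⟨mem_of_mem_erase hb, hfb⟩
    exact ne_of_mem_erase hb (mem_singleton.1 this)
  refine hfa ?_
  simpa [← add_sum_erase s f has] using H.sub_mem hs hrest

theorem card_filter_eq_one_add_two_mul_card_filter_le_sum {α : Type*} (s : Finset α)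
    (f : α → ℕ) : #{a ∈ s | f a = 1} + 2 * #{a ∈ s | 2 ≤ f a} ≤ ∑ a ∈ s, f a := by
  simp only [card_filter, mul_sum, ← sum_add_distrib]
  exact sum_le_sum fun a _ => by split_ifs <;> omega

section Support

variable {ι κ : Type*} [Fintype ι] [Fintype κ]

theorem exists_ne_zero_supported_sums_eq_zero (𝕜 : Type*) [Field 𝕜] (p : ι → κ → Prop)
    [DecidableRel p] (R : Finset ι) (D : Finset κ)
    (h : #R + #D < Fintype.card {e : ι × κ // p e.1 e.2}) :
    ∃ Z : ι → κ → 𝕜, Z ≠ 0 ∧ (∀ i j, ¬ p i j → Z i j = 0) ∧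
      (∀ i ∈ R, ∑ j, Z i j = 0) ∧ ∀ j ∈ D, ∑ i, Z i j = 0 := by
  let Φ : (ι × κ → 𝕜) →ₗ[𝕜] ({e : ι × κ // ¬ p e.1 e.2} → 𝕜) × (R → 𝕜) × (D → 𝕜) :=
    (LinearMap.funLeft 𝕜 𝕜 Subtype.val).prod
      ((LinearMap.pi fun i : R => ∑ j, LinearMap.proj (i.1, j)).prod
        (LinearMap.pi fun j : D => ∑ i, LinearMap.proj (i, j.1)))
  have hdim : Module.finrank 𝕜 (({e : ι × κ // ¬ p e.1 e.2} → 𝕜) × (R → 𝕜) × (D → 𝕜)) <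
      Module.finrank 𝕜 (ι × κ → 𝕜) := by
    simp only [Module.finrank_prod, Module.finrank_fintype_fun_eq_card,
      Fintype.card_subtype_compl, Fintype.card_coe]
    have := Fintype.card_subtype_le (fun e : ι × κ => p e.1 e.2)
    omega
  obtain ⟨z, hz, hz0⟩ :=
    (Submodule.ne_bot_iff _).1 (LinearMap.ker_ne_bot_of_finrank_lt (f := Φ) hdim)
  simp only [Φ, LinearMap.ker_prod, Submodule.mem_inf, LinearMap.mem_ker, funext_iff,
    LinearMap.funLeft_apply, Pi.zero_apply, Subtype.forall, Prod.forall, LinearMap.pi_apply,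
    LinearMap.coe_sum, LinearMap.coe_proj, Finset.sum_apply, Function.eval] at hz
  refine ⟨fun i j => z (i, j), fun h0 => hz0 (funext fun e => congrFun (congrFun h0 e.1) e.2),
    hz.1, hz.2.1, hz.2.2⟩

theorem exists_ne_zero_supported_rowSums_colSums_eq_zero (𝕜 : Type*) [Field 𝕜]
    (p : ι → κ → Prop) [DecidableRel p] (hp : ∃ i j, p i j) (hrow : ∀ i, #{j | p i j} ≠ 1) :
    ∃ Z : ι → κ → 𝕜, Z ≠ 0 ∧ (∀ i j, ¬ p i j → Z i j = 0) ∧ (∀ i, ∑ j, Z i j = 0) ∧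
      ∀ j, #{i | p i j} ≠ 1 → ∑ i, Z i j = 0 := by
  have hcard_row : Fintype.card {e : ι × κ // p e.1 e.2} = ∑ i, #{j | p i j} := by
    rw [Fintype.card_subtype, card_filter, Fintype.sum_prod_type]
    simp only [card_filter]
  have hcard_col : Fintype.card {e : ι × κ // p e.1 e.2} = ∑ j, #{i | p i j} := by
    rw [Fintype.card_subtype, card_filter, Fintype.sum_prod_type_right]
    simp only [card_filter]
  -- The column left out of the constraints: one meeting the support once, if there is one.
  obtain ⟨c₀, hc₀, hc₀one⟩ :
      ∃ c₀, #{i | p i c₀} ≠ 0 ∧ ((∃ j, #{i | p i j} = 1) → #{i | p i c₀} = 1) := by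
    by_cases h1 : ∃ j, #{i | p i j} = 1
    · obtain ⟨j, hj⟩ := h1
      exact ⟨j, by omega, fun _ => hj⟩
    · obtain ⟨i, j, hij⟩ := hp
      exact ⟨j, card_ne_zero.2 ⟨i, by simpa using hij⟩, fun h => absurd h h1⟩
  have hR : 2 * #{i | 2 ≤ #{j | p i j}} ≤ ∑ i, #{j | p i j} := by
    have hrows : #{i | #{j | p i j} = 1} + 2 * #{i | 2 ≤ #{j | p i j}} ≤ ∑ i, #{j | p i j} :=
      card_filter_eq_one_add_two_mul_card_filter_le_sum _ _
    have : #({i | #{j | p i j} = 1} : Finset ι) = 0 := by simp [hrow]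
    omega
  have hD : 2 * #(({j | 2 ≤ #{i | p i j}} : Finset κ).erase c₀) < ∑ j, #{i | p i j} := by
    have hcols : #{j | #{i | p i j} = 1} + 2 * #{j | 2 ≤ #{i | p i j}} ≤ ∑ j, #{i | p i j} :=
      card_filter_eq_one_add_two_mul_card_filter_le_sum _ _
    by_cases h : #{i | p i c₀} = 1
    · rw [erase_eq_of_notMem (by simp [h])]
      have : 0 < #({j | #{i | p i j} = 1} : Finset κ) := card_pos.2 ⟨c₀, by simpa using h⟩
      omega
    · have hc₀mem : c₀ ∈ ({j | 2 ≤ #{i | p i j}} : Finset κ) := by simp; omega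
      rw [card_erase_of_mem hc₀mem]
      have := card_pos.2 ⟨c₀, hc₀mem⟩
      omega
  obtain ⟨Z, hZ0, hsupp, hrowR, hcolD⟩ :=
    exists_ne_zero_supported_sums_eq_zero 𝕜 p {i | 2 ≤ #{j | p i j}}
      (({j | 2 ≤ #{i | p i j}} : Finset κ).erase c₀) (by omega)
  have hrowsum : ∀ i, ∑ j, Z i j = 0 := by
    intro i
    by_cases hi : 2 ≤ #{j | p i j}
    · exact hrowR i (by simpa using hi)
    · have : ∀ j, ¬ p i j := by simpa using (show #{j | p i j} = 0 by have := hrow i; omega)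
      simp [hsupp i _ (this _)]
  have hcol_ne : ∀ j, j ≠ c₀ → #{i | p i j} ≠ 1 → ∑ i, Z i j = 0 := by
    intro j hj h1
    by_cases h0 : #{i | p i j} = 0
    · have : ∀ i, ¬ p i j := by simpa using h0
      simp [hsupp _ j (this _)]
    · exact hcolD j (mem_erase.2 ⟨hj, by simp; omega⟩)
  refine ⟨Z, hZ0, hsupp, hrowsum, fun j hj => ?_⟩
  rcases eq_or_ne j c₀ with rfl | hjc₀
  · -- no column meets the support exactly once, so this column sum is the total sum, zero
    have hno : ∀ j', #{i | p i j'} ≠ 1 := fun j' h => hj (hc₀one ⟨j', h⟩)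
    calc ∑ i, Z i j = ∑ j', ∑ i, Z i j' :=
          (sum_eq_single j (fun j' _ h => hcol_ne j' h (hno j')) (by simp)).symm
      _ = 0 := by rw [sum_comm]; simp [hrowsum]
  · exact hcol_ne j hjc₀ hj

end Support

theorem eq_zero_of_mem_extremePoints_of_eventually_add_smul_mem {E : Type*} [AddCommGroup E]
    [Module ℝ E] {s : Set E} {x v : E} (hx : x ∈ s.extremePoints ℝ)
    (h : ∀ᶠ t in 𝓝 (0 : ℝ), x + t • v ∈ s) : v = 0 := by
  obtain ⟨ε, hε, hball⟩ := Metric.eventually_nhds_iff.1 h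
  have hmem : ∀ t : ℝ, |t| < ε → x + t • v ∈ s := fun t ht =>
    hball (by rwa [Real.dist_eq, sub_zero])
  have hε2 : |ε / 2| < ε := by rw [abs_of_pos (half_pos hε)]; linarith
  have hseg : x ∈ openSegment ℝ (x + (ε / 2) • v) (x + (-(ε / 2)) • v) :=
    ⟨1 / 2, 1 / 2, by norm_num, by norm_num, by norm_num, by module⟩
  have hfix := hx.2 (hmem _ hε2) (hmem _ (by rwa [abs_neg])) hseg
  exact (smul_eq_zero.1 (add_eq_left.1 hfix)).resolve_left (half_pos hε).ne'

theorem eventually_nonneg_add_mul {c z : ℝ} (hc : 0 ≤ c) (hz : z ≠ 0 → 0 < c) :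
    ∀ᶠ t in 𝓝 (0 : ℝ), 0 ≤ c + t * z := by
  rcases eq_or_ne z 0 with rfl | hz0
  · simpa using hc
  · have hlim : Tendsto (fun t : ℝ => c + t * z) (𝓝 0) (𝓝 c) := by
      simpa using ((continuous_mul_const z).tendsto 0).const_add c
    exact (hlim.eventually (lt_mem_nhds (hz hz0))).mono fun _ h => h.le

theorem eq_convexHull_of_extremePoints_subset {E : Type*} [AddCommGroup E] [Module ℝ E]
    [TopologicalSpace E] [T2Space E] [IsTopologicalAddGroup E] [ContinuousSMul ℝ E]
    [LocallyConvexSpace ℝ E] {s t : Set E} (hs : IsCompact s) (hconv : Convex ℝ s)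
    (ht : t.Finite) (hext : s.extremePoints ℝ ⊆ t) (hts : t ⊆ s) : s = convexHull ℝ t := by
  refine (convexHull_min hts hconv).antisymm' ?_
  calc s = closure (convexHull ℝ (s.extremePoints ℝ)) :=
        (closure_convexHull_extremePoints hs hconv).symm
    _ ⊆ closure (convexHull ℝ t) := closure_mono (convexHull_mono hext)
    _ = convexHull ℝ t := (ht.isClosed_convexHull ℝ).closure_eq

theorem isLinearMap_sum {R ι M : Type*} [Semiring R] [Fintype ι] [AddCommMonoid M]
    [Module R M] : IsLinearMap R fun y : ι → M => ∑ i, y i :=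
  ⟨fun y z => by simp [sum_add_distrib], fun c y => by simp [smul_sum]⟩

theorem simplexOf_eq (I : Finset (Fin d)) :
    simplexOf I = stdSimplex ℝ (Fin d) ∩ {x | ∀ j ∉ I, x j = 0} := by
  refine subset_antisymm (convexHull_min ?_ ((convex_stdSimplex ℝ _).inter ?_)) ?_
  · rintro _ ⟨i, hi, rfl⟩
    refine ⟨⟨fun j => ?_, by simp⟩, fun j hj => Pi.single_eq_of_ne (by rintro rfl; exact hj hi) _⟩
    rw [Pi.single_apply]; split_ifs <;> norm_num
  · intro x hx y hy α β _ _ _ j hj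
    simp [hx j hj, hy j hj]
  · rintro x ⟨⟨h0, hsum⟩, hI⟩
    have hx : x = ∑ j ∈ I, x j • (Pi.single j 1 : Fin d → ℝ) := by
      ext k
      by_cases hk : k ∈ I <;> simp [Finset.sum_apply, Pi.single_apply, hk, hI k]
    rw [hx]
    refine (convex_convexHull ℝ _).sum_mem (fun j _ => h0 j) ?_
      fun j hj => subset_convexHull ℝ _ ⟨j, hj, rfl⟩
    rwa [sum_subset I.subset_univ fun j _ hj => hI j hj]

theorem isCompact_simplexOf (I : Finset (Fin d)) : IsCompact (simplexOf I) :=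
  ((I.finite_toSet.image fun i => (Pi.single i 1 : Fin d → ℝ)).subset
    (by rintro _ ⟨i, hi, rfl⟩; exact ⟨i, hi, rfl⟩)).isCompact_convexHull ℝ

def cellLift (T : Fin n → Finset (Fin d)) (a : Fin d → ℝ) : Set (Fin n → Fin d → ℝ) :=
  Set.univ.pi (fun i => simplexOf (T i)) ∩ (fun y => ∑ i, y i) ⁻¹' Set.Ici a

section CellLift

variable (T : Fin n → Finset (Fin d)) (a : Fin d → ℝ)

theorem mem_cellLift_iff {y : Fin n → Fin d → ℝ} :
    y ∈ cellLift T a ↔ (∀ i j, 0 ≤ y i j) ∧ (∀ i j, j ∉ T i → y i j = 0) ∧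
      (∀ i, ∑ j, y i j = 1) ∧ ∀ j, a j ≤ ∑ i, y i j := by
  simp only [cellLift, simplexOf_eq, stdSimplex, Set.mem_inter_iff, Set.mem_pi, Set.mem_univ,
    Set.mem_ofPred_eq, forall_const, forall_and, Set.mem_preimage, Set.mem_Ici, Pi.le_def,
    Finset.sum_apply]
  tauto

theorem image_sum_rows_cellLift :
    (fun y : Fin n → Fin d → ℝ => ∑ i, y i) '' cellLift T a = cell T ∩ Set.Ici a := by
  rw [cellLift, Set.image_inter_preimage]
  congr 1
  ext x
  simp [cell, eq_comm]

theorem isCompact_cellLift : IsCompact (cellLift T a) :=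
  (isCompact_univ_pi fun i => isCompact_simplexOf (T i)).inter_right <|
    isClosed_Ici.preimage (continuous_finsetSum _ fun i _ => continuous_apply i)

theorem convex_cellLift : Convex ℝ (cellLift T a) :=
  (convex_pi fun i _ => (convex_convexHull ℝ _ : Convex ℝ (simplexOf (T i)))).inter
    ((convex_Ici a).is_linear_preimage (f := fun y : Fin n → Fin d → ℝ => ∑ i, y i)
      isLinearMap_sum)

theorem finite_cellLift_inter_intCast :
    {y ∈ cellLift T a | ∀ i j, y i j ∈ (Int.castAddHom ℝ).range}.Finite := by
  refine (Set.Finite.pi fun _ => Set.Finite.pi fun _ =>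
    (Set.finite_Icc (0 : ℤ) 1).image Int.cast).subset ?_
  rintro y ⟨hyQ, hyH⟩ i - j -
  obtain ⟨hy0, -, hrow, -⟩ := (mem_cellLift_iff T a).1 hyQ
  obtain ⟨z, hz⟩ := hyH i j
  replace hz : (z : ℝ) = y i j := hz
  have h1 : y i j ≤ 1 := hrow i ▸ single_le_sum (fun j _ => hy0 i j) (mem_univ j)
  exact ⟨z, ⟨by exact_mod_cast hz ▸ hy0 i j, by exact_mod_cast hz ▸ h1⟩, hz⟩

end CellLift

theorem mem_range_intCast_of_mem_extremePoints_cellLift {T : Fin n → Finset (Fin d)}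
    {a : Fin d → ℤ} {y : Fin n → Fin d → ℝ}
    (hy : y ∈ (cellLift T fun j => (a j : ℝ)).extremePoints ℝ) (i : Fin n) (j : Fin d) :
    y i j ∈ (Int.castAddHom ℝ).range := by
  set H := (Int.castAddHom ℝ).range
  have hH : ∀ z : ℤ, (z : ℝ) ∈ H := fun z => ⟨z, rfl⟩
  obtain ⟨hy0, hyT, hrow, hcol⟩ := (mem_cellLift_iff T _).1 hy.1
  by_contra hij
  obtain ⟨Z, hZ0, hsupp, hZrow, hZcol⟩ :=
    exists_ne_zero_supported_rowSums_colSums_eq_zero ℝ (fun i j => y i j ∉ H) ⟨i, j, hij⟩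
      fun i => card_filter_notMem_ne_one H (by rw [hrow i]; exact_mod_cast hH 1)
  have hpos : ∀ i j, Z i j ≠ 0 → 0 < y i j := fun i j hZ =>
    (hy0 i j).lt_of_ne fun h => hZ (hsupp i j fun hn => hn (h ▸ H.zero_mem))
  -- A column meeting the non-integral entries once has a non-integral sum, hence slack.
  have hslack : ∀ j, ∑ i, Z i j ≠ 0 → (a j : ℝ) < ∑ i, y i j := fun j hZ =>
    (hcol j).lt_of_ne fun h => hZ (hZcol j (card_filter_notMem_ne_one H (h ▸ hH _)))
  refine hZ0 (eq_zero_of_mem_extremePoints_of_eventually_add_smul_mem hy ?_)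
  have hentries : ∀ᶠ t in 𝓝 (0 : ℝ), ∀ i j, 0 ≤ y i j + t * Z i j := by
    simp only [eventually_all]
    exact fun i j => eventually_nonneg_add_mul (hy0 i j) (hpos i j)
  have hcols : ∀ᶠ t in 𝓝 (0 : ℝ), ∀ j, 0 ≤ (∑ i, y i j - a j) + t * ∑ i, Z i j := by
    simp only [eventually_all]
    exact fun j => eventually_nonneg_add_mul (sub_nonneg.2 (hcol j))
      fun h => sub_pos.2 (hslack j h)
  filter_upwards [hentries, hcols] with t ht₁ ht₂
  rw [mem_cellLift_iff]
  simp only [Pi.add_apply, Pi.smul_apply, smul_eq_mul, sum_add_distrib, ← mul_sum]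
  refine ⟨ht₁, fun i j hj => ?_, fun i => by simp [hrow, hZrow], fun j => by linarith [ht₂ j]⟩
  rw [hyT i j hj, hsupp i j fun hn => hn (hyT i j hj ▸ H.zero_mem), mul_zero, add_zero]

theorem cell_orthant_integer_polytope_general {n d : ℕ}
    (T : Fin n → Finset (Fin d)) (a : Fin d → ℤ) :
    ∃ V : Finset (Fin d → ℝ),
      (∀ v ∈ V, ∀ j, ∃ z : ℤ, v j = (z : ℝ)) ∧
      cell T ∩ {x : Fin d → ℝ | ∀ j, (a j : ℝ) ≤ x j} = convexHull ℝ (↑V) := by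
  set H := (Int.castAddHom ℝ).range
  set Q := cellLift T fun j => (a j : ℝ)
  set E := {y ∈ Q | ∀ i j, y i j ∈ H}
  have hE : E.Finite := finite_cellLift_inter_intCast T _
  have hQ : Q = convexHull ℝ E :=
    eq_convexHull_of_extremePoints_subset (isCompact_cellLift T _) (convex_cellLift T _) hE
      (fun y hy => ⟨hy.1, mem_range_intCast_of_mem_extremePoints_cellLift hy⟩)
      (Set.sep_subset _ _)
  refine ⟨(hE.image fun y => ∑ i, y i).toFinset, ?_, ?_⟩
  · simp only [Set.Finite.mem_toFinset]
    rintro _ ⟨y, ⟨-, hyH⟩, rfl⟩ j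
    obtain ⟨z, hz⟩ := H.sum_mem fun i _ => hyH i j
    exact ⟨z, by simpa using hz.symm⟩
  · rw [Set.Finite.coe_toFinset, ← isLinearMap_sum.image_convexHull, ← hQ,
      image_sum_rows_cellLift]
    rfl

/-- the intersection of the cell of a spanning tree of `K_{n,d}` with an
integral orthant `{x : x j ≥ a j}`, if nonempty, is a polytope with integer vertices
(it is the convex hull of finitely many integer points). -/
theorem cell_orthant_integer_polytope {n d : ℕ}
    (T : Fin n → Finset (Fin d)) (hT : IsSpanningTree T) (a : Fin d → ℤ)
    (hne : (cell T ∩ {x : Fin d → ℝ | ∀ j, (a j : ℝ) ≤ x j}).Nonempty) :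
    ∃ V : Finset (Fin d → ℝ),
      (∀ v ∈ V, ∀ j, ∃ z : ℤ, v j = (z : ℝ)) ∧
      cell T ∩ {x : Fin d → ℝ | ∀ j, (a j : ℝ) ≤ x j} = convexHull ℝ (↑V) :=
  cell_orthant_integer_polytope_general T a

end TOMPaper
end
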